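/- Let p(z) = z^n + a_{n-1}z^{n-1} + … + a_1 z + a_0 be a monic polynomial over ℂ of degree n ≥ 3, and suppose τ > 0. Then every complex root λ of p satisfies at least one of the following: (i) |λ| ≤ √((1+2)(1+2.15)) · τ = √9.45 · τ; (ii) |λ| ≤ √3.15 · √(τ² + |a_{n-2}|); (iii) |λ + a_{n-1}| · |λ| ≤ 3.15 · τ²; (iv) |λ + a_{n-1}| · |λ| ≤ τ² + |a_{n-2}|. -/

import Mathlib

open Finset

/-- The `k`-th term in the definition of `τ`: for `k = 3` it is `(|a (n-3)|/2.15)^(1/3)`,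
for `k = 4` it is `(|a (n-4)|/2)^(1/4)`, and for `k ≥ 5` it is `|a (n-k)|^(1/k)`. -/
noncomputable def tauTerm (n k : ℕ) (a : ℕ → ℂ) : ℝ :=
  if k = 3 then (‖a (n - 3)‖ / 2.15) ^ ((1 : ℝ) / 3)
  else if k = 4 then (‖a (n - 4)‖ / 2) ^ ((1 : ℝ) / 4)
  else (‖a (n - k)‖) ^ ((1 : ℝ) / k)

/-- `τ = max{(|a_{n-3}|/2.15)^(1/3), (|a_{n-4}|/2)^(1/4), |a_{n-5}|^(1/5), …, |a_0|^(1/n)}`. -/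
noncomputable def tau (n : ℕ) (a : ℕ → ℂ) (hn : 3 ≤ n) : ℝ :=
  (Finset.Icc 3 n).sup' (Finset.nonempty_Icc.mpr hn) (fun k => tauTerm n k a)

/-- The root bound `Γ(p)`. -/
noncomputable def Gamma (n : ℕ) (a : ℕ → ℂ) (hn : 3 ≤ n) : ℝ :=
  max (Real.sqrt 3.15 *
        Real.sqrt ((tau n a hn) ^ 2 + max (‖a (n - 2)‖) (2 * (tau n a hn) ^ 2)))
      ((‖a (n - 1)‖ +
        Real.sqrt ((‖a (n - 1)‖) ^ 2 +
          4 * ((tau n a hn) ^ 2 + max (‖a (n - 2)‖) (2.15 * (tau n a hn) ^ 2)))) / 2)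

/-! Outside the disc (i), `‖λ‖ ≥ 3τ`. Dividing `p(λ) = 0` by `λ^(n-2)` and bounding
`‖a_{n-k}‖ ≤ w_k τ^k` (with `w_3 = 2.15`, `w_4 = 2`, `w_k = 1` otherwise) gives
`‖λ(λ + a_{n-1}) + a_{n-2}‖ ≤ τ² ∑_{k ≥ 3} w_k 3^{2-k} ≤ τ²`, since
`2.15/3 + 2/9 + 1/18 < 1`; the triangle inequality then yields the Cassini bound (iv). -/

noncomputable def tauWeight (k : ℕ) : ℝ := if k = 3 then 2.15 else if k = 4 then 2 else 1

lemma tauWeight_pos (k : ℕ) : 0 < tauWeight k := by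
  unfold tauWeight; split_ifs <;> norm_num

lemma tauTerm_eq (n k : ℕ) (a : ℕ → ℂ) :
    tauTerm n k a = (‖a (n - k)‖ / tauWeight k) ^ ((1 : ℝ) / k) := by
  unfold tauTerm tauWeight
  split_ifs <;> simp_all

lemma tau_nonneg (n : ℕ) (a : ℕ → ℂ) (hn : 3 ≤ n) : 0 ≤ tau n a hn := by
  refine le_trans ?_ (le_sup' (fun k => tauTerm n k a) (mem_Icc.mpr ⟨le_rfl, hn⟩))
  rw [tauTerm_eq]
  exact Real.rpow_nonneg (div_nonneg (norm_nonneg _) (tauWeight_pos _).le) _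

lemma norm_coeff_le_tauWeight_mul_tau_pow {n : ℕ} (hn : 3 ≤ n) (a : ℕ → ℂ) {i : ℕ}
    (hi : i + 3 ≤ n) : ‖a i‖ ≤ tauWeight (n - i) * tau n a hn ^ (n - i) := by
  have hle : tauTerm n (n - i) a ≤ tau n a hn :=
    le_sup' (fun k => tauTerm n k a) (mem_Icc.mpr ⟨by omega, Nat.sub_le n i⟩)
  have hk : (0 : ℝ) < (n - i : ℕ) := by norm_cast; omega
  rwa [tauTerm_eq, Nat.sub_sub_self (by omega), one_div,
    Real.rpow_inv_le_iff_of_pos (div_nonneg (norm_nonneg _) (tauWeight_pos _).le)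
      (tau_nonneg n a hn) hk, Real.rpow_natCast, div_le_iff₀' (tauWeight_pos _)] at hle

/-- From `j = 2` on the weight is `1`, and adding `(1/3)^(N+1)` to the left is matched by the
right-hand side exactly; the cases `N ≤ 2` are numerical. -/
lemma sum_tauWeight_mul_third_pow_le (N : ℕ) :
    ∑ j ∈ range N, tauWeight (j + 3) * (1 / 3 : ℝ) ^ (j + 1) ≤ 1 - (1 / 3 : ℝ) ^ N / 2 := by
  induction N with
  | zero => norm_num
  | succ N ih =>
    rw [sum_range_succ]
    rcases N with _ | _ | N
    · norm_num [tauWeight]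
    · norm_num [sum_range_succ, tauWeight]
    · have hw : tauWeight (N + 2 + 3) = 1 := by simp [tauWeight]
      rw [hw, pow_succ (1 / 3 : ℝ) (N + 1 + 1)]
      linarith

lemma sum_norm_mul_pow_le {m : ℕ} {a : ℕ → ℂ} {τ R : ℝ} (hτ : 0 ≤ τ) (hR : 3 * τ ≤ R)
    (hcoef : ∀ i < m, ‖a i‖ ≤ tauWeight (m + 2 - i) * τ ^ (m + 2 - i)) :
    ∑ i ∈ range m, ‖a i‖ * R ^ i ≤ τ ^ 2 * R ^ m := by
  have hR0 : 0 ≤ R := by linarith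
  have hterm : ∀ i ∈ range m,
      ‖a i‖ * R ^ i ≤ τ ^ 2 * R ^ m * (tauWeight (m + 2 - i) * (1 / 3 : ℝ) ^ (m - i)) := by
    intro i hi
    have him : i < m := mem_range.mp hi
    have hpow : τ ^ (m + 2 - i) ≤ τ ^ 2 * (R * (1 / 3)) ^ (m - i) := by
      rw [show m + 2 - i = 2 + (m - i) by omega, pow_add]
      gcongr
      linarith
    calc ‖a i‖ * R ^ i ≤ tauWeight (m + 2 - i) * τ ^ (m + 2 - i) * R ^ i := by
          gcongr; exact hcoef i him
      _ ≤ tauWeight (m + 2 - i) * (τ ^ 2 * (R * (1 / 3)) ^ (m - i)) * R ^ i := by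
          have := (tauWeight_pos (m + 2 - i)).le
          gcongr
      _ = τ ^ 2 * (R ^ (m - i) * R ^ i) * (tauWeight (m + 2 - i) * (1 / 3 : ℝ) ^ (m - i)) := by
          ring
      _ = _ := by rw [pow_sub_mul_pow R him.le]
  have hweights : ∑ i ∈ range m, tauWeight (m + 2 - i) * (1 / 3 : ℝ) ^ (m - i) ≤ 1 := by
    rw [← sum_range_reflect]
    calc ∑ j ∈ range m, tauWeight (m + 2 - (m - 1 - j)) * (1 / 3 : ℝ) ^ (m - (m - 1 - j))
        = ∑ j ∈ range m, tauWeight (j + 3) * (1 / 3 : ℝ) ^ (j + 1) := by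
          refine sum_congr rfl fun j hj => ?_
          have := mem_range.mp hj
          rw [show m + 2 - (m - 1 - j) = j + 3 by omega, show m - (m - 1 - j) = j + 1 by omega]
      _ ≤ 1 - (1 / 3 : ℝ) ^ m / 2 := sum_tauWeight_mul_third_pow_le m
      _ ≤ 1 := by linarith [pow_nonneg (by norm_num : (0 : ℝ) ≤ 1 / 3) m]
  calc ∑ i ∈ range m, ‖a i‖ * R ^ i
      ≤ ∑ i ∈ range m, τ ^ 2 * R ^ m * (tauWeight (m + 2 - i) * (1 / 3 : ℝ) ^ (m - i)) :=
        sum_le_sum hterm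
    _ = τ ^ 2 * R ^ m * ∑ i ∈ range m, tauWeight (m + 2 - i) * (1 / 3 : ℝ) ^ (m - i) :=
        (mul_sum _ _ _).symm
    _ ≤ τ ^ 2 * R ^ m := mul_le_of_le_one_right (by positivity) hweights

lemma norm_add_mul_norm_le_of_isRoot {n : ℕ} (hn : 2 ≤ n) {a : ℕ → ℂ} {lam : ℂ}
    (hroot : lam ^ n + ∑ i ∈ range n, a i * lam ^ i = 0) {τ : ℝ} (hτ : 0 ≤ τ)
    (hR : 3 * τ ≤ ‖lam‖)
    (hcoef : ∀ i, i + 3 ≤ n → ‖a i‖ ≤ tauWeight (n - i) * τ ^ (n - i)) :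
    ‖lam + a (n - 1)‖ * ‖lam‖ ≤ τ ^ 2 + ‖a (n - 2)‖ := by
  obtain ⟨m, rfl⟩ : ∃ m, n = m + 2 := ⟨n - 2, by omega⟩
  rw [show m + 2 - 1 = m + 1 by omega, Nat.add_sub_cancel]
  rcases eq_or_ne lam 0 with rfl | hlam
  · simp [add_nonneg (sq_nonneg τ) (norm_nonneg (a m))]
  have hsplit : lam ^ m * (lam * (lam + a (m + 1)) + a m) = -∑ i ∈ range m, a i * lam ^ i := by
    rw [sum_range_succ, sum_range_succ] at hroot
    linear_combination hroot
  have hlead : ‖lam ^ m‖ * ‖lam * (lam + a (m + 1)) + a m‖ ≤ τ ^ 2 * ‖lam‖ ^ m := by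
    rw [← norm_mul, hsplit, norm_neg]
    refine (norm_sum_le _ _).trans ?_
    simp only [norm_mul, norm_pow]
    exact sum_norm_mul_pow_le hτ hR fun i hi => hcoef i (by omega)
  rw [norm_pow] at hlead
  have hquad : ‖lam * (lam + a (m + 1)) + a m‖ ≤ τ ^ 2 :=
    le_of_mul_le_mul_left (by linarith) (pow_pos (norm_pos_iff.mpr hlam) m)
  calc ‖lam + a (m + 1)‖ * ‖lam‖ = ‖lam * (lam + a (m + 1)) + a m - a m‖ := by
        rw [add_sub_cancel_right, norm_mul, mul_comm]
    _ ≤ ‖lam * (lam + a (m + 1)) + a m‖ + ‖a m‖ := norm_sub_le _ _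
    _ ≤ τ ^ 2 + ‖a m‖ := by linarith

theorem root_in_union_of_ovals_general (n : ℕ) (hn : 3 ≤ n) (a : ℕ → ℂ)
    (lam : ℂ)
    (hroot : lam ^ n + ∑ i ∈ Finset.range n, a i * lam ^ i = 0) :
    ‖lam‖ ≤ Real.sqrt 9.45 * tau n a hn ∨
    ‖lam‖ ≤ Real.sqrt 3.15 * Real.sqrt ((tau n a hn) ^ 2 + ‖a (n - 2)‖) ∨
    ‖lam + a (n - 1)‖ * ‖lam‖ ≤ 3.15 * (tau n a hn) ^ 2 ∨
    ‖lam + a (n - 1)‖ * ‖lam‖ ≤ (tau n a hn) ^ 2 + ‖a (n - 2)‖ := by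
  by_cases hsmall : ‖lam‖ ≤ Real.sqrt 9.45 * tau n a hn
  · exact Or.inl hsmall
  have hτ := tau_nonneg n a hn
  have hsqrt : 3 ≤ Real.sqrt 9.45 := (Real.le_sqrt (by norm_num) (by norm_num)).mpr (by norm_num)
  have hR : 3 * tau n a hn ≤ ‖lam‖ := by nlinarith
  exact Or.inr <| Or.inr <| Or.inr <| norm_add_mul_norm_le_of_isRoot (by omega) hroot hτ hR
    fun i hi => norm_coeff_le_tauWeight_mul_tau_pow hn a hi

/-- Every root of a monic polynomial of degree `n ≥ 3` (with `τ > 0`) lies in one of the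
four circular/Cassini regions obtained from the Ostrowski–Brauer ovals of `C(τ)`. -/
theorem root_in_union_of_ovals (n : ℕ) (hn : 3 ≤ n) (a : ℕ → ℂ)
    (htau : 0 < tau n a hn) (lam : ℂ)
    (hroot : lam ^ n + ∑ i ∈ Finset.range n, a i * lam ^ i = 0) :
    ‖lam‖ ≤ Real.sqrt 9.45 * tau n a hn ∨
    ‖lam‖ ≤ Real.sqrt 3.15 * Real.sqrt ((tau n a hn) ^ 2 + ‖a (n - 2)‖) ∨
    ‖lam + a (n - 1)‖ * ‖lam‖ ≤ 3.15 * (tau n a hn) ^ 2 ∨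
    ‖lam + a (n - 1)‖ * ‖lam‖ ≤ (tau n a hn) ^ 2 + ‖a (n - 2)‖ :=
  root_in_union_of_ovals_general n hn a lam hroot
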